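/- arXiv:2212.04434 — 6 statements merged into one kernel-verified Lean document; each statement's English description precedes it below -/
import Mathlib

section
/- For points P_i = (x_i, x_i^2) and P_j = (x_j, x_j^2) on the parabola y = x^2 with x_i, x_j rational and distinct, the Euclidean distance between P_i and P_j is rational if and only if there exists a Pythagorean triplet (α, β, γ) with α, β nonzero integers and γ a positive integer satisfying α² + β² = γ², such that x_i + x_j = β/α. -/
/-!
The squared distance is `(x_j - x_i)^2 * (1 + (x_i + x_j)^2)`, a rational number, so the distance is
rational exactly when this is a square in `ℚ`, i.e. (dividing out the nonzero square
`(x_j - x_i)^2`) when `1 + s^2` is a square for `s = x_i + x_j`. Writing `s = n / m` in lowest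
terms, this says that `m^2 + n^2` is the square of an integer `γ`, and `(m, n, γ)` is the triple.
-/

lemma sq_sub_add_sq_sq_sub {R : Type*} [CommRing R] (a b : R) :
    (b - a) ^ 2 + (b ^ 2 - a ^ 2) ^ 2 = (b - a) ^ 2 * (1 + (a + b) ^ 2) := by
  ring

lemma exists_ratCast_eq_sqrt_iff_isSquare {q : ℚ} (hq : 0 ≤ q) :
    (∃ r : ℚ, √(q : ℝ) = r) ↔ IsSquare q := by
  rw [← not_iff_not, ← irrational_sqrt_ratCast_iff_of_nonneg hq, Irrational, Set.mem_range]
  simp only [eq_comm]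

lemma isSquare_sq_mul_iff {K : Type*} [Field K] {d a : K} (hd : d ≠ 0) :
    IsSquare (d ^ 2 * a) ↔ IsSquare a := by
  refine ⟨fun h => ?_, (IsSquare.sq d).mul⟩
  simpa [hd] using h.div (IsSquare.sq d)

lemma isSquare_one_add_sq_iff (s : ℚ) :
    IsSquare (1 + s ^ 2) ↔ s = 0 ∨ ∃ α β γ : ℤ, α ≠ 0 ∧ β ≠ 0 ∧ 0 < γ ∧ α ^ 2 + β ^ 2 = γ ^ 2 ∧
      s = (β : ℚ) / α := by
  constructor
  · rintro ⟨r, hr⟩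
    refine or_iff_not_imp_left.2 fun hs => ?_
    have hden : (s.den : ℚ) ≠ 0 := by exact_mod_cast s.den_ne_zero
    have hsquare : IsSquare (((s.den : ℤ) ^ 2 + s.num ^ 2 : ℤ) : ℚ) := by
      refine ⟨r * s.den, ?_⟩
      rw [← Rat.num_div_den s] at hr
      field_simp at hr
      push_cast
      linear_combination hr
    obtain ⟨k, hk⟩ := Rat.isSquare_intCast_iff.1 hsquare
    have hk0 : k ≠ 0 := by
      rintro rfl
      have : (0 : ℤ) < (s.den : ℤ) ^ 2 + s.num ^ 2 := by positivity
      simp_all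
    refine ⟨s.den, s.num, |k|, by exact_mod_cast s.den_ne_zero, Rat.num_ne_zero.2 hs,
      abs_pos.2 hk0, by rw [sq_abs, hk, sq], ?_⟩
    exact_mod_cast (Rat.num_div_den s).symm
  · rintro (rfl | ⟨α, β, γ, hα, -, -, hpyth, rfl⟩)
    · exact ⟨1, by norm_num⟩
    · refine ⟨γ / α, ?_⟩
      have hαQ : (α : ℚ) ≠ 0 := by exact_mod_cast hα
      field_simp
      exact_mod_cast hpyth

theorem stmt_0 (xi xj : ℚ) (hne : xi ≠ xj) :
    (∃ q : ℚ, Real.sqrt (((xj : ℝ) - xi)^2 + ((xj : ℝ)^2 - (xi : ℝ)^2)^2) = q) ↔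
      (xi + xj = 0 ∨ ∃ α β γ : ℤ, α ≠ 0 ∧ β ≠ 0 ∧ 0 < γ ∧ α^2 + β^2 = γ^2 ∧
        xi + xj = (β : ℚ) / α) := by
  have hcast : ((xj : ℝ) - xi) ^ 2 + ((xj : ℝ) ^ 2 - (xi : ℝ) ^ 2) ^ 2 =
      (((xj - xi) ^ 2 * (1 + (xi + xj) ^ 2) : ℚ) : ℝ) := by
    push_cast
    exact sq_sub_add_sq_sq_sub _ _
  rw [hcast, exists_ratCast_eq_sqrt_iff_isSquare (by positivity),
    isSquare_sq_mul_iff (sub_ne_zero.2 hne.symm), isSquare_one_add_sq_iff]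
end

section
/- For N ≥ 3, the determinant of the N × N submatrix of C_N consisting of its first N rows equals 2 if N is even and −2 if N is odd, i.e., equals 2·(−1)^N. -/
/-!
Subtracting the rows of the pairs `(1,2)` and `(1,3)` from the row of `(2,3)` leaves `-2` times
the first unit vector. Expanding along that row, the complementary minor (drop the last row and
the first column) is the identity, which gives `-2 · (-1)^(N-1) = 2 · (-1)^N`.
-/

open Matrix

theorem Matrix.det_eq_mul_det_updateRow_of_row_eq_add_add_smul {n R : Type*} [Fintype n]
    [DecidableEq n] [CommRing R] (A : Matrix n n R) {i j k : n} (hi : i ≠ k) (hj : j ≠ k)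
    {c : R} {v : n → R} (h : A k = A i + A j + c • v) :
    A.det = c * (A.updateRow k v).det := by
  conv_lhs => rw [← updateRow_eq_self A k, h]
  rw [det_updateRow_add, det_updateRow_add, det_updateRow_eq_zero hi, det_updateRow_eq_zero hj,
    det_updateRow_smul, zero_add, zero_add]

theorem Matrix.det_eq_of_row_eq_single_zero {R : Type*} [CommRing R] {n : ℕ}
    (A : Matrix (Fin (n + 1)) (Fin (n + 1)) R) {i : Fin (n + 1)} {c : R}
    (h : A i = Pi.single 0 c) :
    A.det = (-1) ^ (i : ℕ) * c * (A.submatrix i.succAbove Fin.succ).det := by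
  rw [det_succ_row A i, Fintype.sum_eq_single 0 fun j hj => by simp [h, hj]]
  simp [h]

/-- The first `N` rows of `C_N`, with `0`-indexed columns: row `i < N - 1` is the pair
`(1, i + 2)`, the last row is the pair `(2, 3)`. -/
def pairIncidenceHead (R : Type*) [Zero R] [One R] (N : ℕ) : Matrix (Fin N) (Fin N) R :=
  Matrix.of fun i j =>
    if i.1 + 1 < N then (if j.1 = 0 ∨ j.1 = i.1 + 1 then 1 else 0)
    else (if j.1 = 1 ∨ j.1 = 2 then 1 else 0)

section

variable (R : Type*) [CommRing R] (n : ℕ)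

theorem pairIncidenceHead_last :
    pairIncidenceHead R (n + 3) (Fin.last (n + 2)) =
      pairIncidenceHead R (n + 3) 0 + pairIncidenceHead R (n + 3) 1 + (-2 : R) • Pi.single 0 1 := by
  ext ⟨j, hj⟩
  simp only [pairIncidenceHead, of_apply, Fin.val_last, Fin.val_zero, Fin.val_one, Pi.add_apply,
    Pi.smul_apply, Pi.single_apply, Fin.ext_iff, smul_eq_mul]
  rcases j with _ | _ | _ | j <;> norm_num

theorem pairIncidenceHead_submatrix_castSucc_succ :
    (pairIncidenceHead R (n + 3)).submatrix Fin.castSucc Fin.succ = 1 := by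
  ext i j
  simp only [pairIncidenceHead, submatrix_apply, of_apply, one_apply, Fin.ext_iff,
    Fin.val_castSucc, Fin.val_succ]
  simp [i.isLt, eq_comm]

theorem det_pairIncidenceHead : (pairIncidenceHead R (n + 3)).det = 2 * (-1) ^ (n + 3) := by
  have h0 : (0 : Fin (n + 3)) ≠ Fin.last (n + 2) := by simp [Fin.ext_iff]
  have h1 : (1 : Fin (n + 3)) ≠ Fin.last (n + 2) := by simp [Fin.ext_iff]
  rw [det_eq_mul_det_updateRow_of_row_eq_add_add_smul _ h0 h1 (pairIncidenceHead_last R n),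
    det_eq_of_row_eq_single_zero _ updateRow_self, submatrix_updateRow_succAbove,
    Fin.succAbove_last, pairIncidenceHead_submatrix_castSucc_succ, det_one, Fin.val_last]
  ring

end

theorem stmt_5 (N : ℕ) (hN : 3 ≤ N) :
    Matrix.det (Matrix.of (fun (i j : Fin N) =>
      if i.1 + 1 < N then (if j.1 = 0 ∨ j.1 = i.1 + 1 then (1 : ℚ) else 0)
      else (if j.1 = 1 ∨ j.1 = 2 then (1 : ℚ) else 0))) = 2 * (-1)^N := by
  obtain ⟨n, rfl⟩ : ∃ n, N = n + 3 := ⟨N - 3, by omega⟩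
  exact det_pairIncidenceHead ℚ n
end

section
/- The set of rationals of the form β/α, where (α, β, γ) ranges over all Pythagorean triplets (nonzero integers α, β and positive integer γ with α² + β² = γ²), together with 0, is dense in ℝ. -/
theorem stmt_11 :
    Dense {x : ℝ | x = 0 ∨ ∃ α β γ : ℤ, α ≠ 0 ∧ β ≠ 0 ∧ 0 < γ ∧
      α^2 + β^2 = γ^2 ∧ x = (β : ℝ) / α} := by
  rw [dense_iff_inter_open]
  intro U hU ⟨x, hxU⟩
  set f : ℝ → ℝ := fun t => 2 * t / (1 - t ^ 2) with hf
  -- continuity of f on Ioo (-1) 1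
  have hcont : ContinuousOn f (Set.Ioo (-1 : ℝ) 1) := by
    apply ContinuousOn.div
    · fun_prop
    · fun_prop
    · intro t ht
      have h1 : t ^ 2 < 1 := by
        have := abs_lt.mpr ⟨ht.1, ht.2⟩
        nlinarith [abs_nonneg t, sq_abs t]
      nlinarith
  have hW : IsOpen (Set.Ioo (-1 : ℝ) 1 ∩ f ⁻¹' U) :=
    hcont.isOpen_inter_preimage isOpen_Ioo hU
  -- f is surjective from Ioo (-1) 1
  have hs : Real.sqrt (1 + x ^ 2) ^ 2 = 1 + x ^ 2 :=
    Real.sq_sqrt (by positivity)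
  set s := Real.sqrt (1 + x ^ 2) with hsdef
  have hs1 : 1 ≤ s := by nlinarith [Real.sqrt_nonneg (1 + x ^ 2)]
  have hxs : |x| < 1 + s := by
    nlinarith [abs_nonneg x, sq_abs x]
  set t₀ : ℝ := x / (1 + s) with ht₀
  have ht₀mem : t₀ ∈ Set.Ioo (-1 : ℝ) 1 := by
    have h : |t₀| < 1 := by
      rw [ht₀, abs_div, abs_of_pos (by linarith : (0:ℝ) < 1 + s)]
      rw [div_lt_one (by linarith)]
      exact hxs
    exact ⟨(abs_lt.mp h).1, (abs_lt.mp h).2⟩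
  have hne : (1 : ℝ) + s ≠ 0 := by positivity
  have hft₀ : f t₀ = x := by
    show 2 * (x / (1 + s)) / (1 - (x / (1 + s)) ^ 2) = x
    have h2 : 1 - (x / (1 + s)) ^ 2 = 2 / (1 + s) := by
      rw [div_pow]
      field_simp
      nlinarith
    rw [h2]
    field_simp
  have hWne : (Set.Ioo (-1 : ℝ) 1 ∩ f ⁻¹' U).Nonempty :=
    ⟨t₀, ht₀mem, by simp [hft₀, hxU]⟩
  -- find a rational in W
  obtain ⟨q, hq⟩ := Rat.denseRange_cast.exists_mem_open hW hWne
  obtain ⟨hqIoo, hqU⟩ := hq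
  rcases eq_or_ne q 0 with h0 | h0
  · refine ⟨f 0, ?_, Or.inl (by simp [hf])⟩
    have : f ((q : ℝ)) ∈ U := hqU
    simpa [h0] using this
  · refine ⟨f (q : ℝ), hqU, Or.inr ?_⟩
    set p : ℤ := q.num with hp
    set n : ℤ := (q.den : ℤ) with hn
    have hn0 : 0 < n := by rw [hn]; exact_mod_cast q.pos
    have hp0 : p ≠ 0 := Rat.num_ne_zero.mpr h0
    have habs' : |(q : ℝ)| < 1 := by
      rw [abs_lt]; exact ⟨hqIoo.1, hqIoo.2⟩
    have hqval : (q : ℝ) = (p : ℝ) / (n : ℝ) := by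
      rw [hp, hn]; push_cast [Rat.cast_def]; ring
    have hnR : (n : ℝ) ≠ 0 := Int.cast_ne_zero.mpr hn0.ne'
    have hpn : p ^ 2 < n ^ 2 := by
      have h1 : |(p : ℝ)| < |(n : ℝ)| := by
        have := habs'
        rw [hqval, abs_div] at this
        rw [← div_lt_one (abs_pos.mpr hnR)]
        exact this
      have h2 : (p : ℝ) ^ 2 < (n : ℝ) ^ 2 := by
        nlinarith [abs_nonneg (p : ℝ), sq_abs (p : ℝ), sq_abs (n : ℝ)]
      exact_mod_cast h2
    refine ⟨n ^ 2 - p ^ 2, 2 * p * n, p ^ 2 + n ^ 2, ?_, ?_, ?_, by ring, ?_⟩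
    · omega
    · positivity
    · positivity
    · rw [hf]
      have hne : (n : ℝ) ^ 2 - (p : ℝ) ^ 2 ≠ 0 := by
        have : (p : ℝ) ^ 2 < (n : ℝ) ^ 2 := by exact_mod_cast hpn
        nlinarith
      rw [hqval]
      push_cast
      field_simp
end

section
/- The set of ratios β/α arising from positive naturally-ordered primitive Pythagorean triplets (pairwise coprime positive integers α < β < γ with α² + β² = γ²) is dense in the real interval [1, ∞). -/
open Set

noncomputable def phi12 (t : ℝ) : ℝ := max ((2*t)/(1-t^2)) ((1-t^2)/(2*t))

def S12 : Set ℝ := {x : ℝ | ∃ α β γ : ℕ, 0 < α ∧ α < β ∧ β < γ ∧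
      α^2 + β^2 = γ^2 ∧ Nat.Coprime α β ∧ Nat.Coprime α γ ∧ Nat.Coprime β γ ∧
      x = (β : ℝ) / α}

def D12 : Set ℝ := {t : ℝ | ∃ n k : ℕ, Odd n ∧ 0 < n ∧ n < 2^k ∧ t = (n:ℝ)/2^k}

lemma phi_mem_S (n k : ℕ) (hodd : Odd n) (h0 : 0 < n) (hk : n < 2^k) :
    phi12 ((n:ℝ)/2^k) ∈ S12 := by
  set m := 2^k with hm
  have hmeven : Even m := by
    rcases Nat.eq_zero_or_pos k with rfl | hkpos
    · omega
    · exact (Nat.even_pow.mpr ⟨even_two, hkpos.ne'⟩)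
  set a := m^2 - n^2 with hadef
  set b := 2*m*n with hbdef
  set c := m^2 + n^2 with hcdef
  have hn2m2 : n^2 < m^2 := Nat.pow_lt_pow_left hk (by norm_num)
  have ha0 : 0 < a := Nat.sub_pos_of_lt hn2m2
  have hkey : a + n^2 = m^2 := Nat.sub_add_cancel hn2m2.le
  have hm2even : Even (m^2) := by
    rw [pow_two]; exact hmeven.mul_right m
  have haodd : Odd a := Nat.Even.sub_odd hn2m2.le hm2even (hodd.pow)
  have hbeven : Even b := ⟨m*n, by ring⟩
  have hb0 : 0 < b := by positivity
  have hab : a ≠ b := by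
    intro h; rw [h] at haodd; exact (Nat.not_odd_iff_even.mpr hbeven) haodd
  have hpyth : a^2 + b^2 = c^2 := by
    have : (a:ℤ)^2 + (b:ℤ)^2 = (c:ℤ)^2 := by
      have hacast : (a:ℤ) = (m:ℤ)^2 - (n:ℤ)^2 := by
        rw [hadef]; push_cast [Nat.cast_sub hn2m2.le]; ring
      rw [hacast]; push_cast [hcdef, hbdef]; ring
    exact_mod_cast this
  have hblt : b < c := by
    have : (b:ℤ) < (c:ℤ) := by
      have hmn : (n:ℤ) < m := by exact_mod_cast hk
      have hn0 : (0:ℤ) < n := by exact_mod_cast h0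
      nlinarith [sq_nonneg ((m:ℤ) - n)]
    exact_mod_cast this
  have halt : a < c := by
    have h1 : a ≤ m^2 := Nat.sub_le _ _
    have h2 : 0 < n^2 := by positivity
    omega
  -- coprimality
  have hmn : Nat.Coprime m n :=
    Nat.Coprime.pow_left k (Nat.coprime_comm.mp hodd.coprime_two_right)
  have ha2 : Nat.Coprime a 2 := haodd.coprime_two_right
  have ham : Nat.Coprime a m := Nat.Coprime.pow_right k ha2
  have han : Nat.Coprime a n := by
    have h1 : Nat.gcd a n ∣ m^2 := by
      rw [← hkey]
      exact Nat.dvd_add (Nat.gcd_dvd_left a n)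
        (dvd_pow (Nat.gcd_dvd_right a n) two_ne_zero)
    have h2 : Nat.gcd a n ∣ Nat.gcd n (m^2) := Nat.dvd_gcd (Nat.gcd_dvd_right a n) h1
    have h3 : Nat.Coprime n (m^2) := (hmn.symm).pow_right 2
    rw [h3] at h2
    exact Nat.dvd_one.mp h2
  have habcop : Nat.Coprime a b := (ha2.mul_right ham).mul_right han
  have hac : Nat.Coprime a c := by
    have hb2 : c^2 - a^2 = b^2 := by omega
    have h1 : Nat.gcd a c ∣ b^2 := by
      rw [← hb2]
      exact Nat.dvd_sub (dvd_pow (Nat.gcd_dvd_right a c) two_ne_zero)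
        (dvd_pow (Nat.gcd_dvd_left a c) two_ne_zero)
    have h2 : Nat.gcd a c ∣ Nat.gcd a (b^2) := Nat.dvd_gcd (Nat.gcd_dvd_left a c) h1
    have h3 : Nat.Coprime a (b^2) := habcop.pow_right 2
    rw [h3] at h2
    exact Nat.dvd_one.mp h2
  have hbc : Nat.Coprime b c := by
    have ha2' : c^2 - b^2 = a^2 := by omega
    have h1 : Nat.gcd b c ∣ a^2 := by
      rw [← ha2']
      exact Nat.dvd_sub (dvd_pow (Nat.gcd_dvd_right b c) two_ne_zero)
        (dvd_pow (Nat.gcd_dvd_left b c) two_ne_zero)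
    have h2 : Nat.gcd b c ∣ Nat.gcd b (a^2) := Nat.dvd_gcd (Nat.gcd_dvd_left b c) h1
    have h3 : Nat.Coprime b (a^2) := (habcop.symm).pow_right 2
    rw [h3] at h2
    exact Nat.dvd_one.mp h2
  -- real computations
  have hmR : (0:ℝ) < (m:ℝ) := by positivity
  have hm2ne : ((m:ℝ))^2 ≠ 0 := by positivity
  have haR : (0:ℝ) < (a:ℝ) := by exact_mod_cast ha0
  have hbR : (0:ℝ) < (b:ℝ) := by exact_mod_cast hb0
  set t : ℝ := (n:ℝ)/2^k with htdef
  have htm : t = (n:ℝ)/(m:ℝ) := by rw [htdef, hm]; push_cast; ring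
  have h1t : 1 - t^2 = (a:ℝ)/(m:ℝ)^2 := by
    rw [htm, hadef]
    push_cast [Nat.cast_sub hn2m2.le]
    field_simp
  have h2t : 2*t = (b:ℝ)/(m:ℝ)^2 := by
    rw [htm, hbdef]; push_cast; field_simp
  have hf1 : (2*t)/(1-t^2) = (b:ℝ)/(a:ℝ) := by
    rw [h1t, h2t]
    field_simp [haR.ne', hbR.ne', hm2ne]
  have hf2 : (1-t^2)/(2*t) = (a:ℝ)/(b:ℝ) := by
    rw [h1t, h2t]
    field_simp [haR.ne', hbR.ne', hm2ne]
  rcases lt_or_gt_of_ne hab with hlt | hlt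
  · refine ⟨a, b, c, ha0, hlt, hblt, hpyth, habcop, hac, hbc, ?_⟩
    have habR : (a:ℝ) ≤ (b:ℝ) := by exact_mod_cast hlt.le
    have hmax : phi12 t = (b:ℝ)/(a:ℝ) := by
      rw [phi12, hf1, hf2]
      apply max_eq_left
      rw [div_le_div_iff₀ hbR haR]
      nlinarith
    rw [← hmax]
  · refine ⟨b, a, c, hb0, hlt, halt, by omega, habcop.symm, hbc, hac, ?_⟩
    have habR : (b:ℝ) ≤ (a:ℝ) := by exact_mod_cast hlt.le
    have hmax : phi12 t = (a:ℝ)/(b:ℝ) := by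
      rw [phi12, hf1, hf2]
      apply max_eq_right
      rw [div_le_div_iff₀ haR hbR]
      nlinarith
    rw [← hmax]

lemma dense_D : ∀ t ∈ Ioo (0:ℝ) 1, t ∈ closure D12 := by
  intro t ht
  rw [Metric.mem_closure_iff]
  intro ε hε
  obtain ⟨k, hkl⟩ := exists_pow_lt_of_lt_one
    (show (0:ℝ) < min ε (1-t) from lt_min hε (by linarith [ht.2]))
    (by norm_num : (1:ℝ)/2 < 1)
  have hMR : (0:ℝ) < (2:ℝ)^k := by positivity
  have hMR' : (0:ℝ) < (2:ℝ)^(k+1) := by positivity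
  have hMinv : (1:ℝ)/(2:ℝ)^k < min ε (1-t) := by
    rw [show (1:ℝ)/(2:ℝ)^k = ((1:ℝ)/2)^k by rw [div_pow]; norm_num]
    exact hkl
  have hεM : (1:ℝ)/(2:ℝ)^k < ε := lt_of_lt_of_le hMinv (min_le_left _ _)
  have h1mt : (1:ℝ)/(2:ℝ)^k < 1 - t := lt_of_lt_of_le hMinv (min_le_right _ _)
  have htM : (0:ℝ) ≤ t * 2^k := by nlinarith [ht.1.le]
  set f : ℕ := ⌊t * (2:ℝ)^k⌋₊ with hf
  have hfle : (f:ℝ) ≤ t * 2^k := Nat.floor_le htM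
  have hflt : t * 2^k < (f:ℝ) + 1 := Nat.lt_floor_add_one _
  have hM1 : (1:ℝ) < (1-t) * 2^k := by
    rw [div_lt_iff₀ hMR] at h1mt; linarith
  have hhalf : (1:ℝ)/2^(k+1) ≤ 1/2^k := by
    apply one_div_le_one_div_of_le hMR
    rw [pow_succ]; nlinarith
  refine ⟨((2*f+1 : ℕ):ℝ)/2^(k+1), ⟨2*f+1, k+1, ⟨f, by omega⟩, by omega, ?_, rfl⟩, ?_⟩
  · have : ((2*f+1 : ℕ):ℝ) < ((2^(k+1) : ℕ):ℝ) := by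
      push_cast [pow_succ]
      nlinarith
    exact_mod_cast this
  · rw [Real.dist_eq, abs_lt]
    have hcast : ((2*f+1:ℕ):ℝ) = 2*(f:ℝ)+1 := by push_cast; ring
    rw [hcast]
    have key1 : (2*(f:ℝ)+1)/2^(k+1) ≤ t + 1/2^(k+1) := by
      rw [div_le_iff₀ hMR', add_mul, div_mul_cancel₀ _ hMR'.ne', pow_succ]
      nlinarith
    have key2 : t - 1/2^k < (2*(f:ℝ)+1)/2^(k+1) := by
      rw [lt_div_iff₀ hMR', sub_mul, pow_succ]
      have h1 : 1/(2:ℝ)^k * (2^k*2) = 2 := by field_simp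
      nlinarith
    constructor
    · linarith
    · linarith

theorem stmt_12 :
    Set.Ici (1 : ℝ) ⊆ closure {x : ℝ | ∃ α β γ : ℕ, 0 < α ∧ α < β ∧ β < γ ∧
      α^2 + β^2 = γ^2 ∧ Nat.Coprime α β ∧ Nat.Coprime α γ ∧ Nat.Coprime β γ ∧
      x = (β : ℝ) / α} := by
  intro x hx
  show x ∈ closure S12
  have hx1 : (1:ℝ) ≤ x := hx
  have hx0 : (0:ℝ) < x := by linarith
  set s : ℝ := Real.sqrt (x^2+1) with hs
  have hs2 : s^2 = x^2 + 1 := Real.sq_sqrt (by positivity)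
  have hs0 : 0 ≤ s := Real.sqrt_nonneg _
  have hs1 : 1 < s := by nlinarith
  set t₀ : ℝ := (s - 1)/x with ht₀
  have ht0pos : 0 < t₀ := by apply div_pos <;> linarith
  have ht0lt : t₀ < 1 := by
    rw [ht₀, div_lt_one hx0]; nlinarith
  have hden1 : (0:ℝ) < 1 - t₀^2 := by nlinarith
  have hden2 : (0:ℝ) < 2*t₀ := by linarith
  have hval : (2*t₀)/(1-t₀^2) = x := by
    rw [div_eq_iff hden1.ne', ht₀]
    field_simp
    nlinarith
  have hphi : phi12 t₀ = x := by
    rw [phi12]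
    have h2 : (1-t₀^2)/(2*t₀) = x⁻¹ := by
      rw [← hval]
      exact (inv_div _ _).symm
    rw [hval, h2]
    apply max_eq_left
    have : x⁻¹ ≤ 1 := by
      rw [inv_le_one_iff₀]; right; exact hx1
    linarith
  have hcont : ContinuousWithinAt phi12 D12 t₀ := by
    have c1 : ContinuousAt (fun t : ℝ => (2*t)/(1-t^2)) t₀ :=
      ContinuousAt.div (by fun_prop) (by fun_prop) hden1.ne'
    have c2 : ContinuousAt (fun t : ℝ => (1-t^2)/(2*t)) t₀ :=
      ContinuousAt.div (by fun_prop) (by fun_prop) hden2.ne'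
    exact ContinuousAt.continuousWithinAt (ContinuousAt.sup c1 c2)
  have hclos : t₀ ∈ closure D12 := dense_D t₀ ⟨ht0pos, ht0lt⟩
  have hmem : phi12 t₀ ∈ closure (phi12 '' D12) := hcont.mem_closure_image hclos
  rw [hphi] at hmem
  refine closure_mono ?_ hmem
  rintro y ⟨u, ⟨n, k, hodd, h0, hk, rfl⟩, rfl⟩
  exact phi_mem_S n k hodd h0 hk
end

section
/- The set of ratios β/α arising from positive primitive Pythagorean triplets (pairwise coprime positive integers with α² + β² = γ²) is dense in (0, ∞). -/
/-!
Euclid's formula: for coprime `m > n > 0` of opposite parity, `(2mn, m² - n², m² + n²)` is a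
primitive triple with ratio `g (m / n)`, where `g r = (r - r⁻¹) / 2`. The map `g` is continuous
on `(1, ∞)` and sends `x + √(x² + 1)` to `x`, so approximating `x + √(x² + 1)` by fractions
`m / 2ᵏ⁺¹` with `m` odd exhibits every `x > 0` as a limit of ratios.
-/

open Filter Topology

def primitivePythagoreanRatios : Set ℝ :=
  {x | ∃ α β γ : ℕ, 0 < α ∧ 0 < β ∧ 0 < γ ∧
      α ^ 2 + β ^ 2 = γ ^ 2 ∧ Nat.Coprime α β ∧ Nat.Coprime α γ ∧ Nat.Coprime β γ ∧
      x = (β : ℝ) / α}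

theorem Nat.Coprime.of_sq_add_sq {a b c : ℕ} (h : a ^ 2 + b ^ 2 = c ^ 2) (hab : a.Coprime b) :
    a.Coprime c := by
  have hac : a.Coprime (c ^ 2) := by
    rw [← h, add_comm, sq a, Nat.coprime_add_mul_left_right]
    exact hab.pow_right 2
  exact (Nat.coprime_pow_right_iff two_pos _ _).mp hac

theorem Nat.coprime_two_mul_mul_sq_sub_sq {m n : ℕ} (hnm : n ≤ m) (hmn : m.Coprime n)
    (hpar : m % 2 = 0 ∧ n % 2 = 1 ∨ m % 2 = 1 ∧ n % 2 = 0) :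
    (2 * m * n).Coprime (m ^ 2 - n ^ 2) := by
  have h := (PythagoreanTriple.coprime_classification (x := 2 * m * n) (y := (m : ℤ) ^ 2 - n ^ 2)
    (z := (m : ℤ) ^ 2 + n ^ 2)).mpr
    ⟨m, n, Or.inr ⟨rfl, rfl⟩, Or.inl rfl, by rwa [Int.gcd_natCast_natCast], by omega⟩
  have hcast : ((m : ℤ) ^ 2 - n ^ 2) = ((m ^ 2 - n ^ 2 : ℕ) : ℤ) := by
    push_cast [Nat.pow_le_pow_left hnm 2]; ring
  rw [hcast, ← Nat.cast_ofNat, ← Nat.cast_mul, ← Nat.cast_mul, Int.gcd_natCast_natCast] at h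
  exact h.2

theorem half_sub_inv_div_mem_primitivePythagoreanRatios {m n : ℕ} (hn : 0 < n) (hnm : n < m)
    (hmn : m.Coprime n) (hpar : m % 2 = 0 ∧ n % 2 = 1 ∨ m % 2 = 1 ∧ n % 2 = 0) :
    ((m / n : ℝ) - (m / n : ℝ)⁻¹) / 2 ∈ primitivePythagoreanRatios := by
  have hm : 0 < m := hn.trans hnm
  have hsq : n ^ 2 < m ^ 2 := Nat.pow_lt_pow_left hnm two_ne_zero
  have htriple : (2 * m * n) ^ 2 + (m ^ 2 - n ^ 2) ^ 2 = (m ^ 2 + n ^ 2) ^ 2 := by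
    zify [hsq.le]; ring
  have hαβ := Nat.coprime_two_mul_mul_sq_sub_sq hnm.le hmn hpar
  refine ⟨2 * m * n, m ^ 2 - n ^ 2, m ^ 2 + n ^ 2, by positivity, by omega, by positivity,
    htriple, hαβ, hαβ.of_sq_add_sq htriple, hαβ.symm.of_sq_add_sq (by rw [← htriple, add_comm]), ?_⟩
  push_cast [hsq.le]
  field_simp

theorem tendsto_odd_div_two_pow {r : ℝ} (hr : 0 ≤ r) :
    Tendsto (fun k : ℕ => ((2 * ⌊r * 2 ^ k⌋₊ + 1 : ℕ) : ℝ) / 2 ^ (k + 1)) atTop (𝓝 r) := by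
  have h0 : Tendsto (fun k : ℕ => ((1 : ℝ) / 2) ^ k) atTop (𝓝 0) :=
    tendsto_pow_atTop_nhds_zero_of_lt_one (by norm_num) (by norm_num)
  refine tendsto_of_tendsto_of_tendsto_of_le_of_le (by simpa using tendsto_const_nhds.sub h0)
    (by simpa using tendsto_const_nhds.add h0) (fun k => ?_) (fun k => ?_)
  all_goals
    have hle := Nat.floor_le (mul_nonneg hr (pow_nonneg zero_le_two k))
    have hlt := Nat.lt_floor_add_one (r * 2 ^ k)
    simp only [pow_succ]
    push_cast
  · rw [le_div_iff₀ (by positivity)]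
    field_simp
    nlinarith
  · rw [div_le_iff₀ (by positivity)]
    field_simp
    nlinarith

theorem add_sqrt_sq_add_one_sub_inv (x : ℝ) :
    (x + √(x ^ 2 + 1)) - (x + √(x ^ 2 + 1))⁻¹ = 2 * x := by
  have hs := Real.sq_sqrt (by positivity : 0 ≤ x ^ 2 + 1)
  have hpos : 0 < x + √(x ^ 2 + 1) := by nlinarith [Real.sqrt_nonneg (x ^ 2 + 1)]
  field_simp
  nlinarith

theorem stmt_13 :
    Set.Ioi (0 : ℝ) ⊆ closure {x : ℝ | ∃ α β γ : ℕ, 0 < α ∧ 0 < β ∧ 0 < γ ∧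
      α^2 + β^2 = γ^2 ∧ Nat.Coprime α β ∧ Nat.Coprime α γ ∧ Nat.Coprime β γ ∧
      x = (β : ℝ) / α} := by
  intro x hx
  set r := x + √(x ^ 2 + 1)
  have hr : 1 < r := by
    have hs := Real.one_le_sqrt.mpr (by nlinarith : 1 ≤ x ^ 2 + 1)
    linarith [Set.mem_Ioi.mp hx]
  have hgr : (r - r⁻¹) / 2 = x := by rw [add_sqrt_sq_add_one_sub_inv]; ring
  have hg : ContinuousAt (fun q : ℝ => (q - q⁻¹) / 2) r := by
    have hr0 : r ≠ 0 := by positivity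
    fun_prop (disch := assumption)
  refine mem_closure_of_tendsto (hgr ▸ hg.tendsto.comp (tendsto_odd_div_two_pow (by linarith)))
    (Eventually.of_forall fun k => ?_)
  have hk : 2 ^ k ≤ ⌊r * 2 ^ k⌋₊ :=
    Nat.le_floor (by push_cast; nlinarith [pow_pos (two_pos : (0 : ℝ) < 2) k])
  have hmem := half_sub_inv_div_mem_primitivePythagoreanRatios (m := 2 * ⌊r * 2 ^ k⌋₊ + 1)
    (n := 2 ^ (k + 1)) (by positivity) (by rw [pow_succ]; omega)
    (Nat.Coprime.pow_right _ (Nat.coprime_two_right.mpr (odd_two_mul_add_one _)))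
    (Or.inr ⟨by omega, by simp [Nat.pow_mod]⟩)
  exact_mod_cast hmem
end

section
/- The set of triples (x_1, x_2, x_3) of pairwise distinct rational numbers such that all three pairwise distances between the points (x_i, x_i²) on the parabola y = x² are rational is dense in ℝ³. -/
-- injectivity of m ↦ (m²-1)/(2m) on positives
lemma finj (m m' : ℚ) (hm : 0 < m) (hm' : 0 < m')
    (h : (m^2 - 1)/(2*m) = (m'^2 - 1)/(2*m')) : m = m' := by
  have h1 : (m^2 - 1) * (2*m') = (m'^2 - 1) * (2*m) := by
    field_simp at h; linarith [h]
  have h2 : (m - m') * (m*m' + 1) = 0 := by linear_combination h1 / 2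
  have h3 : m*m' + 1 > 0 := by positivity
  have := mul_eq_zero.mp h2
  rcases this with h | h
  · linarith
  · linarith

lemma sqrt_lem (m : ℚ) (hm : 0 < m) :
    Real.sqrt (1 + (((m^2-1)/(2*m) : ℚ) : ℝ)^2) = (((m^2+1)/(2*m) : ℚ) : ℝ) := by
  have hm0 : (m : ℝ) ≠ 0 := by positivity
  have h1 : (1 + (((m^2-1)/(2*m):ℚ):ℝ)^2) = (((m^2+1)/(2*m):ℚ):ℝ)^2 := by
    push_cast; field_simp; ring
  have h2 : (0:ℚ) ≤ (m^2+1)/(2*m) := by positivity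
  rw [h1, Real.sqrt_sq (by exact_mod_cast h2)]

lemma key (t ε : ℝ) (hε : 0 < ε) (A : Set ℚ) (hA : A.Finite) :
    ∃ m : ℚ, 0 < m ∧ m ∉ A ∧ |(((m^2 - 1)/(2*m) : ℚ) : ℝ) - t| < ε := by
  set s := Real.sqrt (t^2 + 1) with hs
  have hs2 : s^2 = t^2 + 1 := Real.sq_sqrt (by positivity)
  have hsabs : |t| < s := by
    have h1 : |t| = Real.sqrt (t^2) := by rw [Real.sqrt_sq_eq_abs]
    rw [h1]
    exact Real.sqrt_lt_sqrt (by positivity) (by linarith)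
  set u := t + s with hu
  have hupos : 0 < u := by
    have := neg_abs_le t
    simp only [hu]; linarith
  have hgu : (u^2 - 1)/(2*u) = t := by
    field_simp
    simp only [hu]
    linear_combination hs2
  have hc : ContinuousAt (fun v : ℝ => (v^2 - 1)/(2*v)) u := by
    apply ContinuousAt.div (by fun_prop) (by fun_prop)
    positivity
  rw [Metric.continuousAt_iff] at hc
  obtain ⟨δ, hδ, hcont⟩ := hc ε hε
  set δ' := min δ u with hδ'
  have hδ'pos : 0 < δ' := lt_min hδ hupos
  obtain ⟨q1, hq1, hq1'⟩ := exists_rat_btwn (show u - δ' < u - δ'/2 by linarith)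
  obtain ⟨q2, hq2, hq2'⟩ := exists_rat_btwn (show u - δ'/2 < u by linarith)
  have hq12 : q1 < q2 := by
    have : (q1:ℝ) < q2 := lt_trans hq1' hq2
    exact_mod_cast this
  have hinf : (Set.Ioo q1 q2).Infinite := Set.Ioo_infinite hq12
  obtain ⟨m, hmI, hmA⟩ := (hinf.diff hA).nonempty
  obtain ⟨hm1, hm2⟩ := hmI
  have hml : u - δ' < (m:ℝ) := lt_trans hq1 (by exact_mod_cast hm1)
  have hmu : (m:ℝ) < u := lt_trans (show (m:ℝ) < q2 by exact_mod_cast hm2) hq2'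
  have hmpos : 0 < m := by
    have : (0:ℝ) < m := by
      have : u - δ' ≥ 0 := by
        have : δ' ≤ u := min_le_right δ u
        linarith
      linarith
    exact_mod_cast this
  refine ⟨m, hmpos, hmA, ?_⟩
  have hd : dist ((m:ℝ)) u < δ := by
    rw [Real.dist_eq, abs_lt]
    constructor <;> [skip; skip] <;>
      · have : δ' ≤ δ := min_le_left δ u
        linarith
  have := hcont hd
  rw [hgu, Real.dist_eq] at this
  have hcast : (((m^2 - 1)/(2*m) : ℚ) : ℝ) = ((m:ℝ)^2 - 1)/(2*(m:ℝ)) := by push_cast; ring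
  rw [hcast]
  exact this
theorem stmt_19 :
    Dense {p : ℝ × ℝ × ℝ | ∃ x1 x2 x3 : ℚ, x1 ≠ x2 ∧ x1 ≠ x3 ∧ x2 ≠ x3 ∧
      p = ((x1 : ℝ), (x2 : ℝ), (x3 : ℝ)) ∧
      (∃ q : ℚ, Real.sqrt (1 + ((x1 : ℝ) + x2)^2) = q) ∧
      (∃ q : ℚ, Real.sqrt (1 + ((x1 : ℝ) + x3)^2) = q) ∧
      (∃ q : ℚ, Real.sqrt (1 + ((x2 : ℝ) + x3)^2) = q)} := by
  rw [Metric.dense_iff]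
  rintro ⟨a, b, c⟩ r hr
  have hη : 0 < r/2 := by linarith
  obtain ⟨m12, hp12, -, h12⟩ := key (a + b) (r/2) hη ∅ Set.finite_empty
  obtain ⟨m13, hp13, hA13, h13⟩ := key (a + c) (r/2) hη {m12} (Set.finite_singleton _)
  obtain ⟨m23, hp23, hA23, h23⟩ := key (b + c) (r/2) hη {m12, m13}
    ((Set.finite_singleton m12).insert m13 |>.subset (by intro x hx; simpa [or_comm] using hx))
  set s12 : ℚ := (m12^2 - 1)/(2*m12) with hs12
  set s13 : ℚ := (m13^2 - 1)/(2*m13) with hs13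
  set s23 : ℚ := (m23^2 - 1)/(2*m23) with hs23
  have hm1213 : m12 ≠ m13 := fun h => hA13 (by simp [h])
  have hm1223 : m12 ≠ m23 := fun h => hA23 (by simp [h])
  have hm1323 : m13 ≠ m23 := fun h => hA23 (by simp [h])
  set x1 : ℚ := (s12 + s13 - s23)/2 with hx1
  set x2 : ℚ := (s12 + s23 - s13)/2 with hx2
  set x3 : ℚ := (s13 + s23 - s12)/2 with hx3
  refine ⟨((x1:ℝ), (x2:ℝ), (x3:ℝ)), ?_, ?_⟩
  · -- in the ball
    rw [Metric.mem_ball, Prod.dist_eq, Prod.dist_eq]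
    have e12 := abs_lt.mp h12
    have e13 := abs_lt.mp h13
    have e23 := abs_lt.mp h23
    have c1 : (x1:ℝ) = ((s12:ℝ) + s13 - s23)/2 := by push_cast [hx1]; ring
    have c2 : (x2:ℝ) = ((s12:ℝ) + s23 - s13)/2 := by push_cast [hx2]; ring
    have d1 : dist (x1:ℝ) a < r := by
      rw [Real.dist_eq, abs_lt, c1]; constructor <;> linarith [e12.1, e12.2, e13.1, e13.2, e23.1, e23.2]
    have c3 : (x3:ℝ) = ((s13:ℝ) + s23 - s12)/2 := by push_cast [hx3]; ring
    have d2 : dist (x2:ℝ) b < r := by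
      rw [Real.dist_eq, abs_lt, c2]; constructor <;> linarith [e12.1, e12.2, e13.1, e13.2, e23.1, e23.2]
    have d3 : dist (x3:ℝ) c < r := by
      rw [Real.dist_eq, abs_lt, c3]; constructor <;> linarith [e12.1, e12.2, e13.1, e13.2, e23.1, e23.2]
    simp only [max_lt_iff]
    exact ⟨d1, d2, d3⟩
  · refine ⟨x1, x2, x3, ?_, ?_, ?_, rfl, ?_, ?_, ?_⟩
    · intro h
      have : s13 = s23 := by
        rw [hx1, hx2] at h
        linarith [h]
      exact hm1323 (finj _ _ hp13 hp23 this)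
    · intro h
      have : s12 = s23 := by rw [hx1, hx3] at h; linarith [h]
      exact hm1223 (finj _ _ hp12 hp23 this)
    · intro h
      have : s12 = s13 := by rw [hx2, hx3] at h; linarith [h]
      exact hm1213 (finj _ _ hp12 hp13 this)
    · refine ⟨(m12^2+1)/(2*m12), ?_⟩
      have : ((x1:ℝ) + x2) = ((s12:ℚ):ℝ) := by push_cast [hx1, hx2]; ring
      rw [this, hs12]
      exact sqrt_lem m12 hp12
    · refine ⟨(m13^2+1)/(2*m13), ?_⟩
      have : ((x1:ℝ) + x3) = ((s13:ℚ):ℝ) := by push_cast [hx1, hx3]; ring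
      rw [this, hs13]
      exact sqrt_lem m13 hp13
    · refine ⟨(m23^2+1)/(2*m23), ?_⟩
      have : ((x2:ℝ) + x3) = ((s23:ℚ):ℝ) := by push_cast [hx2, hx3]; ring
      rw [this, hs23]
      exact sqrt_lem m23 hp23
end
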